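/- For all integers n ≥ 2 and d ≥ 1, the identity P_n(d) = ∑_{k=0}^{n−3} (k+1)·C(d,k+2)·P_{n−k−2}(d) + n·C(d−1,n) holds, where the sum is empty when n = 2. (This is the numerical equality (0.4) of the paper specialized to multidegree d_k = 1 for k ≥ 1 and d_0 = d = r, and is equivalent in that case to the description of the graded pieces of the limit mixed Hodge structure in Corollary 5.) -/
import Mathlib

lemma nat2q (e m : ℕ) :
    ((e:ℚ)+2) * (((e+1).choose (m+2) : ℕ) : ℚ) = ((m:ℚ)+3) * (((e+2).choose (m+3) : ℕ) : ℚ) := by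
  have h : (e+2) * (e+1).choose (m+2) = (e+2).choose (m+3) * (m+3) :=
    Nat.add_one_mul_choose_eq (e+1) (m+2)
  have hq := congrArg (Nat.cast : ℕ → ℚ) h
  push_cast at hq
  linarith [hq]

lemma nat1q (e m : ℕ) :
    ((m:ℚ)+3) * ((e:ℚ)+1) * (((e+1).choose (m+2) : ℕ) : ℚ)
      = ((e:ℚ)+2) * ((e:ℚ)+1) * ((e.choose (m+1) : ℕ) : ℚ)
        + ((m:ℚ)+3) * (((e+1).choose (m+3) : ℕ) : ℚ) := by
  rcases le_or_gt (m+1) e with h | h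
  · have hp : (e+1).choose (m+2) = e.choose (m+1) + e.choose (m+2) := Nat.choose_succ_succ e (m+1)
    have hs : (e+1) * e.choose (m+2) = (e+1).choose (m+3) * (m+3) := Nat.add_one_mul_choose_eq e (m+2)
    have hr : e.choose (m+2) * (m+2) = e.choose (m+1) * (e - (m+1)) := Nat.choose_succ_right_eq e (m+1)
    obtain ⟨t, rfl⟩ : ∃ t, e = m+1+t := ⟨e-(m+1), by omega⟩
    have ht : m+1+t - (m+1) = t := by omega
    rw [ht] at hr
    have hsq : ((m:ℚ)+1+t+1) * ((((m+1+t).choose (m+2)) : ℕ) : ℚ)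
        = (((m+1+t+1).choose (m+3) : ℕ) : ℚ) * ((m:ℚ)+3) := by exact_mod_cast hs
    have hrq : (((m+1+t).choose (m+2) : ℕ) : ℚ) * ((m:ℚ)+2)
        = (((m+1+t).choose (m+1) : ℕ) : ℚ) * (t:ℚ) := by exact_mod_cast hr
    have hpq : (((m+1+t+1).choose (m+2) : ℕ) : ℚ)
        = (((m+1+t).choose (m+1) : ℕ) : ℚ) + (((m+1+t).choose (m+2) : ℕ) : ℚ) := by exact_mod_cast hp
    push_cast
    push_cast at hsq hrq hpq
    linear_combination ((m:ℚ)+3) * ((m:ℚ)+(t:ℚ)+2) * hpq + hsq + ((m:ℚ)+(t:ℚ)+2) * hrq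
  · rw [Nat.choose_eq_zero_of_lt (by omega : e < m+1),
        Nat.choose_eq_zero_of_lt (by omega : e+1 < m+2),
        Nat.choose_eq_zero_of_lt (by omega : e+1 < m+3)]
    push_cast
    ring

lemma Vlem (e : ℕ) : ∀ m : ℕ,
    (∑ k ∈ Finset.range (m+1),
      ((k:ℚ)+1) * (((e+2).choose (k+2) : ℕ) : ℚ) * (-1:ℚ)^(m-k))
    = ((e:ℚ)+2) * ((e.choose (m+1) : ℕ) : ℚ) - (((e+1).choose (m+2) : ℕ) : ℚ) + (-1:ℚ)^m := by
  intro m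
  induction m with
  | zero =>
      have h2a : (e+2).choose 2 * 2 = (e+2).choose 1 * (e+2-1) := Nat.choose_succ_right_eq (e+2) 1
      have h2b : (e+1).choose 2 * 2 = (e+1).choose 1 * (e+1-1) := Nat.choose_succ_right_eq (e+1) 1
      simp [Nat.choose_one_right] at h2a h2b
      have h2aq : (((e+2).choose 2 : ℕ) : ℚ) * 2 = ((e:ℚ)+2) * ((e:ℚ)+1) := by exact_mod_cast h2a
      have h2bq : (((e+1).choose 2 : ℕ) : ℚ) * 2 = ((e:ℚ)+1) * (e:ℚ) := by exact_mod_cast h2b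
      simp [Finset.sum_range_one, Nat.choose_one_right]
      push_cast
      linear_combination (1/2 : ℚ) * h2aq + (1/2 : ℚ) * h2bq
  | succ m ih =>
      have hsum : (∑ k ∈ Finset.range (m+1),
            ((k:ℚ)+1) * (((e+2).choose (k+2) : ℕ) : ℚ) * (-1:ℚ)^(m+1-k))
          = ∑ k ∈ Finset.range (m+1),
            -(((k:ℚ)+1) * (((e+2).choose (k+2) : ℕ) : ℚ) * (-1:ℚ)^(m-k)) := by
        refine Finset.sum_congr rfl fun k hk => ?_
        have hk' : k ≤ m := Nat.lt_succ_iff.mp (Finset.mem_range.mp hk)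
        have h1 : m+1-k = (m-k)+1 := by omega
        rw [h1, pow_succ]; ring
      rw [Finset.sum_range_succ, hsum, Finset.sum_neg_distrib, ih]
      have hp1 : (((e+1).choose (m+2) : ℕ) : ℚ)
          = ((e.choose (m+1) : ℕ) : ℚ) + ((e.choose (m+2) : ℕ) : ℚ) := by
        exact_mod_cast Nat.choose_succ_succ e (m+1)
      have hp2 : (((e+2).choose (m+3) : ℕ) : ℚ)
          = (((e+1).choose (m+2) : ℕ) : ℚ) + (((e+1).choose (m+3) : ℕ) : ℚ) := by
        exact_mod_cast Nat.choose_succ_succ (e+1) (m+2)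
      have hn2 := nat2q e m
      have hidx : m + 1 - (m+1) = 0 := by omega
      rw [hidx]
      push_cast
      linear_combination ((e:ℚ)+2) * hp1 - hp2 - hn2

lemma mainq (e : ℕ) : ∀ m : ℕ,
    ((e:ℚ)+1) * (((e:ℚ)+1)^(m+2) - (-1:ℚ)^(m+2))
      = (∑ k ∈ Finset.range m, ((k:ℚ)+1) * (((e+2).choose (k+2) : ℕ) : ℚ) *
          (((e:ℚ)+1) * (((e:ℚ)+1)^(m-k) - (-1:ℚ)^(m-k))))
        + ((m:ℚ)+2) * ((e:ℚ)+2) * (((e+1).choose (m+2) : ℕ) : ℚ) := by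
  intro m
  induction m with
  | zero =>
    have h2b : (e+1).choose 2 * 2 = (e+1).choose 1 * (e+1-1) := Nat.choose_succ_right_eq (e+1) 1
    simp [Nat.choose_one_right] at h2b
    have h2bq : (((e+1).choose 2 : ℕ) : ℚ) * 2 = ((e:ℚ)+1) * (e:ℚ) := by exact_mod_cast h2b
    simp only [Finset.range_zero, Finset.sum_empty, Nat.cast_zero, zero_add]
    linear_combination (-(e:ℚ)-2) * h2bq
  | succ m ih =>
    have hsum : (∑ k ∈ Finset.range (m+1), ((k:ℚ)+1) * (((e+2).choose (k+2) : ℕ) : ℚ) *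
          (((e:ℚ)+1) * (((e:ℚ)+1)^(m+1-k) - (-1:ℚ)^(m+1-k))))
        = ∑ k ∈ Finset.range (m+1),
            (((e:ℚ)+1) * (((k:ℚ)+1) * (((e+2).choose (k+2) : ℕ) : ℚ) *
              (((e:ℚ)+1) * (((e:ℚ)+1)^(m-k) - (-1:ℚ)^(m-k))))
            + (((e:ℚ)+1) * ((e:ℚ)+2)) *
              (((k:ℚ)+1) * (((e+2).choose (k+2) : ℕ) : ℚ) * (-1:ℚ)^(m-k))) := by
      refine Finset.sum_congr rfl fun k hk => ?_
      have hk' : k ≤ m := Nat.lt_succ_iff.mp (Finset.mem_range.mp hk)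
      have h1 : m+1-k = (m-k)+1 := by omega
      rw [h1, pow_succ, pow_succ]; ring
    have hfirst : (∑ k ∈ Finset.range (m+1), ((k:ℚ)+1) * (((e+2).choose (k+2) : ℕ) : ℚ) *
          (((e:ℚ)+1) * (((e:ℚ)+1)^(m-k) - (-1:ℚ)^(m-k))))
        = ∑ k ∈ Finset.range m, ((k:ℚ)+1) * (((e+2).choose (k+2) : ℕ) : ℚ) *
          (((e:ℚ)+1) * (((e:ℚ)+1)^(m-k) - (-1:ℚ)^(m-k))) := by
      rw [Finset.sum_range_succ, Nat.sub_self]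
      simp
    rw [hsum, Finset.sum_add_distrib, ← Finset.mul_sum, ← Finset.mul_sum, hfirst, Vlem e m]
    push_cast
    linear_combination ((e:ℚ)+1) * ih + ((e:ℚ)+2) * nat1q e m

/-- With `P_m(d) := (d - 1) * ((d - 1)^m - (-1)^m) / d` (the dimension of the reduced
middle primitive cohomology of a smooth degree-`d` hypersurface in `ℙ^m`), for all
integers `n ≥ 2` and `d ≥ 1` one has the numerical equality (0.4) of the paper
specialized to multidegree `d_k = 1` for `k ≥ 1` and `d_0 = d = r`:
`P_n(d) = ∑_{k=0}^{n-3} (k+1) * C(d, k+2) * P_{n-k-2}(d) + n * C(d-1, n)`,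
the sum being empty for `n = 2`. -/
theorem stmt_3 (P : ℕ → ℕ → ℚ)
    (hP : ∀ m d : ℕ, P m d = ((d : ℚ) - 1) * (((d : ℚ) - 1) ^ m - (-1) ^ m) / (d : ℚ))
    (n d : ℕ) (hn : 2 ≤ n) (hd : 1 ≤ d) :
    P n d = (∑ k ∈ Finset.range (n - 2),
        ((k : ℚ) + 1) * (d.choose (k + 2) : ℚ) * P (n - k - 2) d) +
      (n : ℚ) * ((d - 1).choose n : ℚ) := by
  obtain ⟨m, rfl⟩ : ∃ m, n = m + 2 := ⟨n - 2, by omega⟩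
  have hidx : ∀ k : ℕ, m + 2 - k - 2 = m - k := fun k => by omega
  match d, hd with
  | 1, _ =>
    simp only [hP]
    norm_num
  | (e+2), _ =>
    have key := mainq e m
    simp only [hP, hidx]
    have h1 : m + 2 - 2 = m := by omega
    have h2 : e + 2 - 1 = e + 1 := by omega
    rw [h1, h2]
    have hc : ((e:ℚ)+2) ≠ 0 := by positivity
    have hcast : ∀ k : ℕ, ((k:ℚ)+1) * (((e+2).choose (k+2) : ℕ) : ℚ) *
        ((((e+2:ℕ) : ℚ) - 1) * ((((e+2:ℕ) : ℚ) - 1) ^ (m-k) - (-1:ℚ) ^ (m-k)) / ((e+2:ℕ) : ℚ))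
        = (((k:ℚ)+1) * (((e+2).choose (k+2) : ℕ) : ℚ) *
            (((e:ℚ)+1) * (((e:ℚ)+1) ^ (m-k) - (-1:ℚ) ^ (m-k)))) / ((e:ℚ)+2) := by
      intro k
      push_cast
      ring
    simp only [hcast]
    rw [← Finset.sum_div]
    push_cast
    rw [div_add' _ _ _ hc, div_eq_div_iff hc hc]
    linear_combination ((e:ℚ)+2) * key
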